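/- Pole behaviour at the Landau–transverse levels: let B ≠ 0, d > 0, b ∈ (0,d), let z₀ ∈ Σ_B, and set J(z₀) := {n ∈ ℤ_{≥1} : ∃ m ∈ ℤ_{≥0}, |B|(2m+1) + (πn/d)² = z₀}. Then the function z ↦ ξ_B(b,z) + (|B|/(πd))·(Σ_{n ∈ J(z₀)} sin²(πnb/d))/(z − z₀) remains bounded as z → z₀ with z ∉ Σ_B; in particular, if Σ_{n ∈ J(z₀)} sin²(πnb/d) > 0, then ξ_B(b,z) → +∞ as z → z₀− and ξ_B(b,z) → −∞ as z → z₀+. -/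

import Mathlib

open Real Filter Topology Asymptotics

/-- The digamma function `ψ = Γ'/Γ`. -/
noncomputable def digamma (x : ℝ) : ℝ := deriv Real.Gamma x / Real.Gamma x

/-- The set of Landau–transverse levels
`Σ_B = {|B|(2m+1) + (πn/d)² : m ∈ ℤ_{≥0}, n ∈ ℤ_{≥1}}` of the free magnetic
Hamiltonian in a Dirichlet layer of width `d`. -/
def landauLevels (B d : ℝ) : Set ℝ :=
  {x | ∃ m n : ℕ, x = |B| * (2 * (m : ℝ) + 1) + (π * ((n : ℝ) + 1) / d) ^ 2}

/-- The `n`-th term (for `n+1`-st transverse mode) of the series defining the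
magnetic regularized Green's function:
`t_n = ln((πn)²/(2|B|d²)) − ψ((|B| − z + (πn/d)²)/(2|B|))`. -/
noncomputable def magTerm (B d z : ℝ) (n : ℕ) : ℝ :=
  Real.log ((π * ((n : ℝ) + 1)) ^ 2 / (2 * |B| * d ^ 2)) -
    digamma ((|B| - z + (π * ((n : ℝ) + 1) / d) ^ 2) / (2 * |B|))

/-- The magnetic regularized Green's function `ξ_B(b,z)` of a point interaction at
height `b ∈ (0,d)` in the Dirichlet layer of width `d` with homogeneous magnetic
field of strength `B`. -/
noncomputable def xiB (B d b z : ℝ) : ℝ :=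
  (1 / (2 * π * d)) * ∑' n : ℕ, magTerm B d z n * Real.sin (π * ((n : ℝ) + 1) * b / d) ^ 2
    + (1 / (4 * π * d)) *
      (Real.eulerMascheroniConstant + digamma (b / d) + (π / 2) * Real.cot (π * b / d))

lemma hasDerivAt_logGamma {x : ℝ} (hx : 0 < x) :
    HasDerivAt (Real.log ∘ Real.Gamma) (digamma x) x := by
  have hne : ∀ m : ℕ, x ≠ -(m : ℝ) := by
    intro m hm
    rw [hm] at hx
    have : -(m : ℝ) ≤ 0 := neg_nonpos.mpr (Nat.cast_nonneg m)
    linarith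
  exact ((Real.differentiableAt_Gamma hne).hasDerivAt.log
    (Real.Gamma_pos_of_pos hx).ne')

lemma digamma_monotoneOn : MonotoneOn digamma (Set.Ioi (0:ℝ)) := by
  have h := Real.convexOn_log_Gamma.monotoneOn_deriv
    (fun x hx => (hasDerivAt_logGamma hx).differentiableAt)
  intro x hx y hy hxy
  have ex : deriv (Real.log ∘ Real.Gamma) x = digamma x := (hasDerivAt_logGamma hx).deriv
  have ey : deriv (Real.log ∘ Real.Gamma) y = digamma y := (hasDerivAt_logGamma hy).deriv
  rw [← ex, ← ey]
  exact h hx hy hxy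

lemma slope_logGamma {x : ℝ} (hx : 0 < x) :
    slope (Real.log ∘ Real.Gamma) x (x + 1) = Real.log x := by
  rw [slope_def_field]
  simp only [Function.comp_apply]
  rw [Real.Gamma_add_one hx.ne', Real.log_mul hx.ne' (Real.Gamma_pos_of_pos hx).ne']
  ring

lemma digamma_le_log {x : ℝ} (hx : 0 < x) : digamma x ≤ Real.log x := by
  have h := Real.convexOn_log_Gamma.le_slope_of_hasDerivAt (Set.mem_Ioi.2 hx)
    (Set.mem_Ioi.2 (by linarith)) (lt_add_one x) (hasDerivAt_logGamma hx)
  rwa [slope_logGamma hx] at h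

lemma log_le_digamma_add_one {x : ℝ} (hx : 0 < x) : Real.log x ≤ digamma (x + 1) := by
  have h := Real.convexOn_log_Gamma.slope_le_of_hasDerivAt (Set.mem_Ioi.2 hx)
    (Set.mem_Ioi.2 (by linarith)) (lt_add_one x) (hasDerivAt_logGamma (by linarith))
  rwa [slope_logGamma hx] at h

lemma digamma_add_one {x : ℝ} (hx : ∀ m : ℕ, x ≠ -(m : ℝ)) :
    digamma (x + 1) = digamma x + 1 / x := by
  have hx0 : x ≠ 0 := by simpa using hx 0
  have hΓ : HasDerivAt Real.Gamma (deriv Real.Gamma x) x :=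
    (Real.differentiableAt_Gamma hx).hasDerivAt
  have hx1 : ∀ m : ℕ, x + 1 ≠ -(m : ℝ) := by
    intro m hm
    have := hx (m + 1)
    push_cast at this
    apply this; linarith
  have hshift : HasDerivAt (fun y => Real.Gamma (y + 1)) (deriv Real.Gamma (x + 1)) x := by
    have h1 : HasDerivAt Real.Gamma (deriv Real.Gamma (x + 1)) (x + 1) :=
      (Real.differentiableAt_Gamma hx1).hasDerivAt
    simpa [Function.comp_def] using h1.comp x ((hasDerivAt_id x).add_const 1)
  have hprod : HasDerivAt (fun y => y * Real.Gamma y)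
      (1 * Real.Gamma x + x * deriv Real.Gamma x) x := (hasDerivAt_id x).mul hΓ
  have hEv : (fun y => Real.Gamma (y + 1)) =ᶠ[𝓝 x] fun y => y * Real.Gamma y := by
    filter_upwards [eventually_ne_nhds hx0] with y hy
    exact Real.Gamma_add_one hy
  have huniq : deriv Real.Gamma (x + 1) = 1 * Real.Gamma x + x * deriv Real.Gamma x :=
    hshift.unique (hprod.congr_of_eventuallyEq hEv)
  have hΓx : Real.Gamma x ≠ 0 := Real.Gamma_ne_zero hx
  unfold digamma
  rw [huniq, Real.Gamma_add_one hx0]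
  field_simp
  ring

lemma digamma_shift {x : ℝ} (hx : ∀ m : ℕ, x ≠ -(m : ℝ)) (N : ℕ) :
    digamma (x + N) = digamma x + ∑ k ∈ Finset.range N, 1 / (x + k) := by
  induction N with
  | zero => simp
  | succ N ih =>
    have hxN : ∀ m : ℕ, x + N ≠ -(m : ℝ) := by
      intro m hm
      have := hx (m + N)
      push_cast at this
      apply this; linarith
    have h1 : digamma (x + N + 1) = digamma (x + N) + 1 / (x + N) :=
      digamma_add_one hxN
    have hcast : x + ((N : ℝ) + 1) = x + N + 1 := by ring
    push_cast
    rw [hcast, h1, ih, Finset.sum_range_succ]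
    ring

lemma abs_log_one_add_le {u : ℝ} (hu : |u| ≤ 1 / 2) : |Real.log (1 + u)| ≤ 2 * |u| := by
  have h1 : -(1/2 : ℝ) ≤ u := neg_le_of_abs_le hu
  have h2 : u ≤ 1/2 := le_of_abs_le hu
  have hpos : (0:ℝ) < 1 + u := by linarith
  have hub : Real.log (1 + u) ≤ u := by
    have := Real.log_le_sub_one_of_pos hpos; linarith
  have hlb : u / (1 + u) ≤ Real.log (1 + u) := by
    have hpos' : (0:ℝ) < (1 + u)⁻¹ := by positivity
    have h := Real.log_le_sub_one_of_pos hpos'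
    rw [Real.log_inv] at h
    have : (1 + u)⁻¹ - 1 = -(u / (1 + u)) := by field_simp; ring
    rw [this] at h
    linarith
  rw [abs_le]
  constructor
  · have habs : |u / (1 + u)| ≤ 2 * |u| := by
      rw [abs_div, abs_of_pos hpos]
      rw [div_le_iff₀ hpos]
      nlinarith [abs_nonneg u]
    have := neg_le_of_abs_le habs
    linarith
  · have := le_abs_self u; have := abs_nonneg u; linarith

lemma digamma_ge_log_sub_one {x : ℝ} (hx : 1 < x) : Real.log (x - 1) ≤ digamma x := by
  have h := log_le_digamma_add_one (x := x - 1) (by linarith)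
  simpa using h

lemma digamma_tail {cz an : ℝ} (h : 2 * (|cz| + 1) ≤ an) :
    |Real.log an - digamma (cz + an)| ≤ 4 * (|cz| + 1) / an := by
  have hcz0 : 0 ≤ |cz| := abs_nonneg cz
  have hcz1 : -|cz| ≤ cz := neg_abs_le cz
  have hcz2 : cz ≤ |cz| := le_abs_self cz
  have han : 0 < an := by linarith
  set x := cz + an with hxdef
  have hx2 : 2 ≤ x := by simp only [hxdef]; linarith
  have hxpos : 0 < x := by linarith
  have hub : digamma x ≤ Real.log x := digamma_le_log hxpos
  have hlb : Real.log (x - 1) ≤ digamma x := digamma_ge_log_sub_one (by linarith)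
  have e1 : Real.log x - Real.log an = Real.log (1 + cz / an) := by
    rw [← Real.log_div hxpos.ne' han.ne']
    congr 1
    field_simp
    rw [hxdef]; ring
  have e2 : Real.log (x - 1) - Real.log an = Real.log (1 + (cz - 1) / an) := by
    rw [← Real.log_div (by linarith : x - 1 ≠ 0) han.ne']
    congr 1
    field_simp
    rw [hxdef]; ring
  have h2 : |cz - 1| ≤ |cz| + 1 := by
    calc |cz - 1| ≤ |cz| + |(1:ℝ)| := abs_sub cz 1
    _ = |cz| + 1 := by norm_num
  have b1 : |Real.log (1 + cz / an)| ≤ 2 * (|cz| / an) := by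
    have hq : |cz / an| ≤ 1 / 2 := by
      rw [abs_div, abs_of_pos han, div_le_iff₀ han]; linarith
    have h' := abs_log_one_add_le hq
    rwa [abs_div, abs_of_pos han] at h'
  have b2 : |Real.log (1 + (cz - 1) / an)| ≤ 2 * ((|cz| + 1) / an) := by
    have hq : |(cz - 1) / an| ≤ 1 / 2 := by
      rw [abs_div, abs_of_pos han, div_le_iff₀ han]; linarith
    have h' := abs_log_one_add_le hq
    have h3 : |(cz - 1) / an| ≤ (|cz| + 1) / an := by
      rw [abs_div, abs_of_pos han]
      exact div_le_div_of_nonneg_right h2 han.le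
    linarith
  have hd1 : |cz| / an ≤ (|cz| + 1) / an :=
    div_le_div_of_nonneg_right (by linarith) han.le
  have hkey : 4 * (|cz| + 1) / an = 2 * ((|cz| + 1) / an) + 2 * ((|cz| + 1) / an) := by ring
  have b1' := neg_le_of_abs_le b1
  have b1'' := le_of_abs_le b1
  have b2' := neg_le_of_abs_le b2
  have b2'' := le_of_abs_le b2
  rw [abs_le]
  constructor <;> [skip; skip] <;> nlinarith

lemma digamma_abs_le_max {x u v : ℝ} (hu : 0 < u) (hx : x ∈ Set.Icc u v) :
    |digamma x| ≤ max |digamma u| |digamma v| := by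
  obtain ⟨h1, h2⟩ := hx
  have hxpos : 0 < x := lt_of_lt_of_le hu h1
  have hvpos : 0 < v := lt_of_lt_of_le hxpos h2
  have l1 : digamma u ≤ digamma x := digamma_monotoneOn hu hxpos h1
  have l2 : digamma x ≤ digamma v := digamma_monotoneOn hxpos hvpos h2
  rw [abs_le]
  constructor
  · have := neg_abs_le (digamma u); have := le_max_left |digamma u| |digamma v|; linarith
  · have := le_abs_self (digamma v); have := le_max_right |digamma u| |digamma v|; linarith

lemma digamma_bddOnIcc {u v : ℝ} (h : ∀ m : ℕ, -(m : ℝ) ∉ Set.Icc u v) :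
    ∃ M, ∀ x ∈ Set.Icc u v, |digamma x| ≤ M := by
  rcases le_or_gt u v with huv | huv
  swap
  · exact ⟨0, fun x hx => absurd (hx.1.trans hx.2) (not_le.mpr huv)⟩
  obtain ⟨N, hN⟩ := exists_nat_gt (-u)
  have huN : 0 < u + N := by linarith
  set g : ℝ → ℝ := fun x => ∑ k ∈ Finset.range N, 1 / (x + k) with hg
  have hgc : ContinuousOn g (Set.Icc u v) := by
    apply continuousOn_finset_sum
    intro k _
    apply ContinuousOn.div continuousOn_const (by fun_prop)
    intro x hx hx0
    exact h k (by rw [← neg_eq_of_add_eq_zero_left hx0] at hx; simpa using hx)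
  obtain ⟨M₂, hM₂⟩ := isCompact_Icc.exists_bound_of_continuousOn hgc
  refine ⟨max |digamma (u + N)| |digamma (v + N)| + M₂, fun x hx => ?_⟩
  have hxne : ∀ m : ℕ, x ≠ -(m : ℝ) := by
    intro m hm
    exact h m (hm ▸ hx)
  have hshift := digamma_shift hxne N
  have hdx : digamma x = digamma (x + N) - g x := by rw [hshift]; ring
  have hb1 : |digamma (x + N)| ≤ max |digamma (u + N)| |digamma (v + N)| :=
    digamma_abs_le_max huN ⟨by linarith [hx.1], by linarith [hx.2]⟩
  have hb2 : |g x| ≤ M₂ := by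
    have := hM₂ x hx
    rwa [Real.norm_eq_abs] at this
  rw [hdx]
  calc |digamma (x + N) - g x| ≤ |digamma (x + N)| + |g x| := abs_sub _ _
  _ ≤ _ := by linarith

lemma digamma_bdd_near {ρ : ℝ} (hρ : ∀ m : ℕ, ρ ≠ -(m : ℝ)) :
    ∃ δ, 0 < δ ∧ ∃ M, ∀ x ∈ Set.Icc (ρ - δ) (ρ + δ), |digamma x| ≤ M := by
  rcases lt_or_ge 0 ρ with hpos | hneg
  · refine ⟨ρ / 2, by linarith, ?_⟩
    apply digamma_bddOnIcc
    intro m hm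
    have : -(m : ℝ) ≤ 0 := neg_nonpos.mpr (Nat.cast_nonneg m)
    have := hm.1
    linarith
  · have hρ0 : ρ ≠ 0 := by simpa using hρ 0
    have hρneg : ρ < 0 := lt_of_le_of_ne hneg hρ0
    have hnotint : ρ ≠ ⌊ρ⌋ := by
      intro hfl
      have hfneg : ⌊ρ⌋ < 0 := by
        have : (⌊ρ⌋ : ℝ) < 0 := hfl ▸ hρneg
        exact_mod_cast this
      apply hρ (-⌊ρ⌋).toNat
      have h2 : ((-⌊ρ⌋).toNat : ℤ) = -⌊ρ⌋ := Int.toNat_of_nonneg (by omega)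
      have h3 : (((-⌊ρ⌋).toNat : ℕ) : ℝ) = -(⌊ρ⌋ : ℝ) := by exact_mod_cast h2
      rw [h3, neg_neg]
      exact hfl
    have hfr : 0 < Int.fract ρ := Int.fract_pos.mpr hnotint
    have hfr1 : Int.fract ρ < 1 := Int.fract_lt_one ρ
    set δ := min (Int.fract ρ) (1 - Int.fract ρ) / 2 with hδ
    have hδpos : 0 < δ := by
      apply div_pos _ two_pos
      exact lt_min hfr (by linarith)
    refine ⟨δ, hδpos, ?_⟩
    apply digamma_bddOnIcc
    intro m hm
    have hfract : ρ = ⌊ρ⌋ + Int.fract ρ := by rw [Int.fract]; ring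
    have hl : (⌊ρ⌋ : ℝ) < -(m : ℝ) := by
      have := hm.1
      have hδle : δ ≤ Int.fract ρ / 2 := by
        rw [hδ]; apply div_le_div_of_nonneg_right (min_le_left _ _) two_pos.le
      linarith
    have hr : -(m : ℝ) < (⌊ρ⌋ : ℝ) + 1 := by
      have := hm.2
      have hδle : δ ≤ (1 - Int.fract ρ) / 2 := by
        rw [hδ]; apply div_le_div_of_nonneg_right (min_le_right _ _) two_pos.le
      linarith
    have hl' : (⌊ρ⌋ : ℤ) < -(m : ℤ) := by exact_mod_cast hl
    have hr' : -(m : ℤ) < ⌊ρ⌋ + 1 := by exact_mod_cast hr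
    omega

lemma digamma_pole {m : ℕ} {ε : ℝ} (hε : ε ≠ 0) (hε2 : |ε| ≤ 1 / 2) :
    |digamma (-(m : ℝ) + ε) + 1 / ε| ≤ max |digamma (1/2)| |digamma (3/2)| + 2 * m := by
  have hε1 : -(1/2:ℝ) ≤ ε := neg_le_of_abs_le hε2
  have hε3 : ε ≤ 1/2 := le_of_abs_le hε2
  set x := -(m : ℝ) + ε with hx
  have hxne : ∀ k : ℕ, x ≠ -(k : ℝ) := by
    intro k hk
    have : ε = (m : ℝ) - k := by rw [hx] at hk; linarith
    rcases lt_trichotomy m k with h | h | h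
    · have : (m : ℝ) + 1 ≤ k := by exact_mod_cast h
      linarith
    · subst h; simp at this; exact hε this
    · have : (k : ℝ) + 1 ≤ m := by exact_mod_cast h
      linarith
  have hshift := digamma_shift hxne (m + 1)
  have hx1 : x + ((m : ℕ) + 1 : ℕ) = 1 + ε := by push_cast; rw [hx]; ring
  rw [hx1, Finset.sum_range_succ] at hshift
  have hxm : x + (m : ℝ) = ε := by rw [hx]; ring
  rw [hxm] at hshift
  have key : digamma x + 1/ε = digamma (1 + ε) - ∑ k ∈ Finset.range m, 1 / (x + k) := by
    rw [hshift]; ring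
  rw [key]
  have hb1 : |digamma (1 + ε)| ≤ max |digamma (1/2)| |digamma (3/2)| := by
    apply digamma_abs_le_max (by norm_num : (0:ℝ) < 1/2)
    constructor <;> [linarith; linarith]
  have hb2 : |∑ k ∈ Finset.range m, 1 / (x + k)| ≤ 2 * m := by
    calc |∑ k ∈ Finset.range m, 1 / (x + k)| ≤ ∑ k ∈ Finset.range m, |1 / (x + k)| :=
        Finset.abs_sum_le_sum_abs _ _
    _ ≤ ∑ _k ∈ Finset.range m, 2 := by
        apply Finset.sum_le_sum
        intro k hk
        have hkm : k < m := Finset.mem_range.mp hk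
        have hkm' : (k : ℝ) + 1 ≤ m := by exact_mod_cast hkm
        have habs : 1/2 ≤ |(-(m:ℝ) + ε + k)| := by
          rcases abs_cases (-(m:ℝ) + ε + k) with ⟨he, h0⟩ | ⟨he, h0⟩ <;> rw [he] <;> linarith
        rw [hx]
        rw [abs_div, abs_one, div_le_iff₀ (by linarith : (0:ℝ) < |(-(m:ℝ) + ε + k)|)]
        linarith
    _ = 2 * m := by simp [Finset.sum_const, mul_comm]
  calc |digamma (1 + ε) - ∑ k ∈ Finset.range m, 1 / (x + k)|
      ≤ |digamma (1 + ε)| + |∑ k ∈ Finset.range m, 1 / (x + k)| := abs_sub _ _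
  _ ≤ _ := by linarith

lemma exists_pos_forall_lt {Q : ℕ → ℝ → Prop} (N : ℕ)
    (mono : ∀ n δ δ', 0 < δ' → δ' ≤ δ → Q n δ → Q n δ')
    (h : ∀ n, n < N → ∃ δ, 0 < δ ∧ Q n δ) :
    ∃ δ, 0 < δ ∧ ∀ n, n < N → Q n δ := by
  induction N with
  | zero => exact ⟨1, one_pos, fun n hn => absurd hn (Nat.not_lt_zero n)⟩
  | succ N ih =>
    obtain ⟨δ₁, hδ₁, h₁⟩ := ih (fun n hn => h n (hn.trans (Nat.lt_succ_self N)))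
    obtain ⟨δ₂, hδ₂, h₂⟩ := h N (Nat.lt_succ_self N)
    refine ⟨min δ₁ δ₂, lt_min hδ₁ hδ₂, fun n hn => ?_⟩
    rcases Nat.lt_succ_iff_lt_or_eq.mp hn with hn' | rfl
    · exact mono n δ₁ _ (lt_min hδ₁ hδ₂) (min_le_left _ _) (h₁ n hn')
    · exact mono n δ₂ _ (lt_min hδ₁ hδ₂) (min_le_right _ _) h₂

set_option maxHeartbeats 2000000 in
lemma xiB_bounded_aux (B d b z₀ : ℝ) (hB : B ≠ 0) (hd : 0 < d) (s : ℝ)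
    (hs : s = ∑' n : {n : ℕ // ∃ m : ℕ,
        |B| * (2 * (m : ℝ) + 1) + (π * (((n : ℕ) : ℝ) + 1) / d) ^ 2 = z₀},
      Real.sin (π * (((n : ℕ) : ℝ) + 1) * b / d) ^ 2) :
    ∃ δ C, 0 < δ ∧ ∀ z, z ≠ z₀ → |z - z₀| ≤ δ →
      |xiB B d b z + |B| / (π * d) * s / (z - z₀)| ≤ C := by
  classical
  have hπ := Real.pi_pos
  have hA : 0 < |B| := abs_pos.mpr hB
  set A := |B| with hAdef
  set w : ℕ → ℝ := fun n => Real.sin (π * ((n:ℝ) + 1) * b / d) ^ 2 with hwdef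
  have hw0 : ∀ n, 0 ≤ w n := fun n => sq_nonneg _
  have hw1 : ∀ n, w n ≤ 1 := fun n => Real.sin_sq_le_one _
  set a : ℕ → ℝ := fun n => (π * ((n:ℝ) + 1) / d) ^ 2 / (2 * A) with hadef
  set c : ℝ → ℝ := fun z => (A - z) / (2 * A) with hcdef
  have hapos : ∀ n, 0 < a n := by
    intro n
    simp only [hadef]
    have h1 : (0:ℝ) < (n:ℝ) + 1 := by positivity
    positivity
  have hmag : ∀ z n, magTerm B d z n = Real.log (a n) - digamma (c z + a n) := by
    intro z n
    rw [magTerm, ← hAdef]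
    congr 2
    · simp only [hadef]
      field_simp
    · simp only [hcdef, hadef]
      field_simp
  set P : ℕ → Prop := fun n => ∃ m : ℕ, A * (2*(m:ℝ)+1) + (π * ((n:ℝ)+1)/d)^2 = z₀
    with hPdef
  have hPiff : ∀ n, P n ↔ ∃ m : ℕ, c z₀ + a n = -(m:ℝ) := by
    intro n
    simp only [hPdef, hcdef, hadef]
    set X := (π * ((n:ℝ)+1)/d)^2 with hX
    constructor
    · rintro ⟨m, hm⟩
      refine ⟨m, ?_⟩
      rw [← hm]
      field_simp
      ring
    · rintro ⟨m, hm⟩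
      refine ⟨m, ?_⟩
      field_simp at hm
      linarith
  set M₀ : ℝ := |c z₀| + 1 with hM₀
  have hM₀pos : 0 < M₀ := by positivity
  set Ca : ℝ := 2 * A * d^2 / π^2 with hCa
  have hCapos : 0 < Ca := by positivity
  have hainv : ∀ n, a n = ((n:ℝ)+1)^2 / Ca := by
    intro n
    simp only [hadef, hCa]
    field_simp
  obtain ⟨N, hNge⟩ := exists_nat_ge (2 * (M₀ + 1) * Ca)
  have haN : ∀ n, N ≤ n → 2 * (M₀ + 1) ≤ a n := by
    intro n hn
    have h1 : (N:ℝ) ≤ (n:ℝ) := Nat.cast_le.mpr hn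
    have h2 : (1:ℝ) ≤ (n:ℝ) + 1 := by have : (0:ℝ) ≤ (n:ℝ) := Nat.cast_nonneg n; linarith
    rw [hainv, le_div_iff₀ hCapos]
    nlinarith
  have hJlt : ∀ n, P n → n < N := by
    intro n hPn
    by_contra hcon
    push_neg at hcon
    obtain ⟨m, hm⟩ := (hPiff n).mp hPn
    have hm0 : -(m:ℝ) ≤ 0 := neg_nonpos.mpr (Nat.cast_nonneg m)
    have h1 : a n ≤ |c z₀| := by
      have := neg_abs_le (c z₀)
      linarith
    have := haN n hcon
    simp only [hM₀] at this
    linarith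
  have hfin : s = ∑ n ∈ (Finset.range N).filter P, w n := by
    rw [hs]
    have hzero : ∀ n : ℕ, n ∉ (Finset.range N).filter P → Set.indicator {k | P k} w n = 0 := by
      intro n hn
      apply Set.indicator_of_notMem
      intro hPn
      exact hn (Finset.mem_filter.mpr ⟨Finset.mem_range.mpr (hJlt n hPn), hPn⟩)
    calc ∑' (n : Subtype P), w ↑n
        = ∑' (n : ℕ), Set.indicator {k | P k} w n := tsum_subtype {k | P k} w
      _ = ∑ n ∈ (Finset.range N).filter P, Set.indicator {k | P k} w n := tsum_eq_sum hzero
      _ = ∑ n ∈ (Finset.range N).filter P, w n :=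
          Finset.sum_congr rfl (fun n hn => Set.indicator_of_mem (show n ∈ {k | P k} from (Finset.mem_filter.mp hn).2) w)
  have hcdiff : ∀ z, c z - c z₀ = (z₀ - z) / (2 * A) := by
    intro z
    simp only [hcdef]
    field_simp
    ring
  have hczM : ∀ z, |z - z₀| ≤ A → |c z| ≤ M₀ := by
    intro z hz
    have h1 : c z = c z₀ + (z₀ - z) / (2 * A) := by have := hcdiff z; linarith
    have h2 : |(z₀ - z) / (2 * A)| ≤ 1 / 2 := by
      rw [abs_div, abs_of_pos (by positivity : (0:ℝ) < 2 * A), div_le_iff₀ (by positivity : (0:ℝ) < 2*A)]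
      rw [abs_sub_comm]
      linarith
    calc |c z| = |c z₀ + (z₀ - z) / (2 * A)| := by rw [h1]
    _ ≤ |c z₀| + |(z₀ - z) / (2 * A)| := abs_add_le _ _
    _ ≤ M₀ := by simp only [hM₀]; linarith
  have htailterm : ∀ z, |z - z₀| ≤ A → ∀ n, N ≤ n →
      |magTerm B d z n * w n| ≤ 4 * (M₀ + 1) * Ca / ((n:ℝ) + 1)^2 := by
    intro z hz n hn
    have hcz := hczM z hz
    have h1 : 2 * (|c z| + 1) ≤ a n := le_trans (by linarith) (haN n hn)
    have h2 := digamma_tail h1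
    have h4 : 4 * (|c z| + 1) / a n ≤ 4 * (M₀ + 1) / a n := by
      gcongr
    have h5 : 4 * (M₀ + 1) / a n = 4 * (M₀ + 1) * Ca / ((n:ℝ) + 1)^2 := by
      rw [hainv n]
      have hn1 : ((n:ℝ) + 1) ≠ 0 := by positivity
      field_simp
    calc |magTerm B d z n * w n|
        = |(Real.log (a n) - digamma (c z + a n)) * w n| := by rw [hmag]
      _ ≤ |Real.log (a n) - digamma (c z + a n)| := by
          rw [abs_mul, abs_of_nonneg (hw0 n)]
          exact mul_le_of_le_one_right (abs_nonneg _) (hw1 n)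
      _ ≤ 4 * (|c z| + 1) / a n := h2
      _ ≤ 4 * (M₀ + 1) / a n := h4
      _ = 4 * (M₀ + 1) * Ca / ((n:ℝ) + 1)^2 := h5
  have hbase : Summable (fun n : ℕ => 1 / ((n:ℝ) + 1)^2) := by
    have h0 : Summable (fun n : ℕ => 1 / (n:ℝ)^2) := by
      have := Real.summable_one_div_nat_pow (p := 2)
      exact this.mpr one_lt_two
    have h1 := (summable_nat_add_iff 1).mpr h0
    apply h1.congr
    intro n
    push_cast
    ring
  have hg : Summable (fun n : ℕ => 4 * (M₀ + 1) * Ca / ((n:ℝ) + 1)^2) := by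
    apply (hbase.mul_left (4 * (M₀ + 1) * Ca)).congr
    intro n
    ring
  set Ctail : ℝ := ∑' n : ℕ, 4 * (M₀ + 1) * Ca / ((n:ℝ) + 1)^2 with hCtail
  have hshiftbd : ∀ z, |z - z₀| ≤ A → ∀ n : ℕ,
      |magTerm B d z (n + N) * w (n + N)| ≤ 4 * (M₀ + 1) * Ca / ((n:ℝ) + 1)^2 := by
    intro z hz n
    have h1 := htailterm z hz (n + N) (Nat.le_add_left N n)
    have h2 : 4 * (M₀ + 1) * Ca / (((n + N : ℕ):ℝ) + 1)^2 ≤ 4 * (M₀ + 1) * Ca / ((n:ℝ) + 1)^2 := by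
      have hNn : ((n:ℝ) + 1) ≤ ((n + N : ℕ):ℝ) + 1 := by
        push_cast
        linarith [Nat.cast_nonneg (α := ℝ) N]
      gcongr
    exact h1.trans h2
  have hsumz : ∀ z, |z - z₀| ≤ A → Summable (fun n => magTerm B d z n * w n) := by
    intro z hz
    apply (summable_nat_add_iff N).mp
    apply Summable.of_norm_bounded (g := fun n : ℕ => 4 * (M₀ + 1) * Ca / ((n:ℝ) + 1)^2) hg
    intro n
    rw [Real.norm_eq_abs]
    exact hshiftbd z hz n
  have htailsum : ∀ z, |z - z₀| ≤ A →
      |∑' n : ℕ, magTerm B d z (n + N) * w (n + N)| ≤ Ctail := by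
    intro z hz
    have hsumabs : Summable (fun n => |magTerm B d z (n + N) * w (n + N)|) :=
      Summable.of_nonneg_of_le (fun n => abs_nonneg _) (hshiftbd z hz) hg
    have h1 : |∑' n : ℕ, magTerm B d z (n + N) * w (n + N)|
        ≤ ∑' n : ℕ, |magTerm B d z (n + N) * w (n + N)| := by
      have := norm_tsum_le_tsum_norm (f := fun n => magTerm B d z (n + N) * w (n + N))
        (by simp only [Real.norm_eq_abs]; exact hsumabs)
      simp only [Real.norm_eq_abs] at this
      exact this
    exact h1.trans (Summable.tsum_le_tsum (hshiftbd z hz) hsumabs hg)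
  have hper : ∀ n : ℕ, ∃ δ, 0 < δ ∧ ∃ D, ∀ z, z ≠ z₀ → |z - z₀| ≤ δ →
      |magTerm B d z n * w n - (if P n then 2 * A / (z₀ - z) * w n else 0)| ≤ D := by
    intro n
    by_cases hPn : P n
    · obtain ⟨m, hm⟩ := (hPiff n).mp hPn
      refine ⟨A, hA, |Real.log (a n)| + (max |digamma (1/2)| |digamma (3/2)| + 2 * m), ?_⟩
      intro z hzne hzδ
      rw [if_pos hPn]
      have hε : (z₀ - z) / (2 * A) ≠ 0 := div_ne_zero (sub_ne_zero.mpr (Ne.symm hzne)) (by positivity)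
      have hεabs : |(z₀ - z) / (2 * A)| ≤ 1 / 2 := by
        rw [abs_div, abs_of_pos (by positivity : (0:ℝ) < 2 * A), div_le_iff₀ (by positivity : (0:ℝ) < 2 * A)]
        rw [abs_sub_comm]
        linarith
      have heq : c z + a n = -(m:ℝ) + (z₀ - z) / (2 * A) := by
        have := hcdiff z
        linarith
      have hpole := digamma_pole (m := m) hε hεabs
      have h2A : 2 * A / (z₀ - z) = 1 / ((z₀ - z) / (2 * A)) := by
        rw [one_div_div]
      have hkey : magTerm B d z n * w n - 2 * A / (z₀ - z) * w n
          = (Real.log (a n) - (digamma (-(m:ℝ) + (z₀ - z) / (2 * A)) + 1 / ((z₀ - z) / (2 * A)))) * w n := by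
        rw [hmag, heq, h2A]
        ring
      rw [hkey]
      calc |(Real.log (a n) - (digamma (-(m:ℝ) + (z₀ - z) / (2 * A)) + 1 / ((z₀ - z) / (2 * A)))) * w n|
          ≤ |Real.log (a n) - (digamma (-(m:ℝ) + (z₀ - z) / (2 * A)) + 1 / ((z₀ - z) / (2 * A)))| := by
            rw [abs_mul, abs_of_nonneg (hw0 n)]
            exact mul_le_of_le_one_right (abs_nonneg _) (hw1 n)
        _ ≤ |Real.log (a n)| + |digamma (-(m:ℝ) + (z₀ - z) / (2 * A)) + 1 / ((z₀ - z) / (2 * A))| :=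
            abs_sub _ _
        _ ≤ |Real.log (a n)| + (max |digamma (1/2)| |digamma (3/2)| + 2 * m) := by linarith
    · have hρ : ∀ m : ℕ, c z₀ + a n ≠ -(m:ℝ) := fun m hm => hPn ((hPiff n).mpr ⟨m, hm⟩)
      obtain ⟨δ₀, hδ₀, M, hM⟩ := digamma_bdd_near hρ
      refine ⟨2 * A * δ₀, by positivity, |Real.log (a n)| + M, ?_⟩
      intro z hzne hzδ
      rw [if_neg hPn, sub_zero]
      have heq : c z + a n = (c z₀ + a n) + (z₀ - z) / (2 * A) := by
        have := hcdiff z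
        linarith
      have hεabs : |(z₀ - z) / (2 * A)| ≤ δ₀ := by
        rw [abs_div, abs_of_pos (by positivity : (0:ℝ) < 2 * A), div_le_iff₀ (by positivity : (0:ℝ) < 2 * A)]
        rw [abs_sub_comm]
        linarith
      have hmem : c z + a n ∈ Set.Icc (c z₀ + a n - δ₀) (c z₀ + a n + δ₀) := by
        have h1 := neg_le_of_abs_le hεabs
        have h2 := le_of_abs_le hεabs
        constructor <;> (rw [heq]) <;> linarith
      have hMx := hM _ hmem
      calc |magTerm B d z n * w n|
          = |(Real.log (a n) - digamma (c z + a n)) * w n| := by rw [hmag]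
        _ ≤ |Real.log (a n) - digamma (c z + a n)| := by
            rw [abs_mul, abs_of_nonneg (hw0 n)]
            exact mul_le_of_le_one_right (abs_nonneg _) (hw1 n)
        _ ≤ |Real.log (a n)| + |digamma (c z + a n)| := abs_sub _ _
        _ ≤ |Real.log (a n)| + M := by linarith
  choose δf hδf Df hDf using hper
  obtain ⟨δh, hδh, hδhall⟩ := exists_pos_forall_lt
    (Q := fun n δ => ∀ z, z ≠ z₀ → |z - z₀| ≤ δ →
      |magTerm B d z n * w n - (if P n then 2 * A / (z₀ - z) * w n else 0)| ≤ Df n) N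
    (fun n δ δ' h0 hle hQ z hz1 hz2 => hQ z hz1 (hz2.trans hle))
    (fun n _ => ⟨δf n, hδf n, hDf n⟩)
  set C₀ : ℝ := (1 / (4 * π * d)) *
      (Real.eulerMascheroniConstant + digamma (b / d) + (π / 2) * Real.cot (π * b / d)) with hC₀
  have hxiBeq : ∀ z, xiB B d b z = (1 / (2 * π * d)) * ∑' n : ℕ, magTerm B d z n * w n + C₀ := by
    intro z
    simp only [xiB, hwdef, hC₀]
  refine ⟨min δh A, (1 / (2 * π * d)) * ((∑ n ∈ Finset.range N, Df n) + Ctail) + |C₀|,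
    lt_min hδh hA, ?_⟩
  intro z hzne hzδ
  have hzA : |z - z₀| ≤ A := hzδ.trans (min_le_right _ _)
  have hzh : |z - z₀| ≤ δh := hzδ.trans (min_le_left _ _)
  have hsummz := hsumz z hzA
  have hsplit := Summable.sum_add_tsum_nat_add (f := fun n => magTerm B d z n * w n) N hsummz
  have hz0 : z - z₀ ≠ 0 := sub_ne_zero.mpr hzne
  have hz0' : z₀ - z ≠ 0 := sub_ne_zero.mpr (Ne.symm hzne)
  have hhead : |(∑ n ∈ Finset.range N, magTerm B d z n * w n) - 2 * A * s / (z₀ - z)|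
      ≤ ∑ n ∈ Finset.range N, Df n := by
    have hrw : 2 * A * s / (z₀ - z)
        = ∑ n ∈ Finset.range N, (if P n then 2 * A / (z₀ - z) * w n else 0) := by
      rw [hfin, Finset.sum_filter, Finset.mul_sum, Finset.sum_div]
      apply Finset.sum_congr rfl
      intro n _
      split
      · field_simp
      · simp
    rw [hrw, ← Finset.sum_sub_distrib]
    calc |∑ n ∈ Finset.range N,
          (magTerm B d z n * w n - (if P n then 2 * A / (z₀ - z) * w n else 0))|
        ≤ ∑ n ∈ Finset.range N,
          |magTerm B d z n * w n - (if P n then 2 * A / (z₀ - z) * w n else 0)| :=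
          Finset.abs_sum_le_sum_abs _ _
      _ ≤ ∑ n ∈ Finset.range N, Df n :=
          Finset.sum_le_sum fun n hn => hδhall n (Finset.mem_range.mp hn) z hzne hzh
  have htail := htailsum z hzA
  have hxiB2 : xiB B d b z + A / (π * d) * s / (z - z₀)
      = (1 / (2 * π * d)) * (((∑ n ∈ Finset.range N, magTerm B d z n * w n) - 2 * A * s / (z₀ - z))
        + ∑' n : ℕ, magTerm B d z (n + N) * w (n + N)) + C₀ := by
    rw [hxiBeq z, ← hsplit]
    field_simp
    ring
  rw [hxiB2]
  have hpos : (0:ℝ) < 1 / (2 * π * d) := by positivity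
  set X := (∑ n ∈ Finset.range N, magTerm B d z n * w n) - 2 * A * s / (z₀ - z) with hX
  set Y := ∑' n : ℕ, magTerm B d z (n + N) * w (n + N) with hY
  calc |(1 / (2 * π * d)) * (X + Y) + C₀|
      ≤ |(1 / (2 * π * d)) * (X + Y)| + |C₀| := abs_add_le _ _
    _ = (1 / (2 * π * d)) * |X + Y| + |C₀| := by rw [abs_mul, abs_of_pos hpos]
    _ ≤ (1 / (2 * π * d)) * (|X| + |Y|) + |C₀| := by
        have := abs_add_le X Y
        nlinarith
    _ ≤ (1 / (2 * π * d)) * ((∑ n ∈ Finset.range N, Df n) + Ctail) + |C₀| := by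
        have h1 : |X| + |Y| ≤ (∑ n ∈ Finset.range N, Df n) + Ctail := add_le_add hhead htail
        nlinarith

/-- Pole behaviour of `ξ_B` at a Landau–transverse level `z₀`: with
`s = Σ_{n ∈ J(z₀)} sin²(πnb/d)`, the function
`z ↦ ξ_B(b,z) + (|B|/(πd))·s/(z − z₀)` stays bounded as `z → z₀` outside `Σ_B`;
if `s > 0` then `ξ_B(b,z) → +∞` as `z → z₀−` and `ξ_B(b,z) → −∞` as `z → z₀+`. -/
theorem xiB_pole_at_level (B d b z₀ : ℝ) (hB : B ≠ 0) (hd : 0 < d)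
    (hb0 : 0 < b) (hbd : b < d) (hz₀ : z₀ ∈ landauLevels B d)
    (s : ℝ)
    (hs : s = ∑' n : {n : ℕ // ∃ m : ℕ,
        |B| * (2 * (m : ℝ) + 1) + (π * (((n : ℕ) : ℝ) + 1) / d) ^ 2 = z₀},
      Real.sin (π * (((n : ℕ) : ℝ) + 1) * b / d) ^ 2) :
    (∃ C : ℝ, ∀ᶠ z in 𝓝[(landauLevels B d)ᶜ] z₀,
        |xiB B d b z + (|B| / (π * d)) * s / (z - z₀)| ≤ C) ∧
    (0 < s →
      Tendsto (xiB B d b) (𝓝[Set.Iio z₀ \ landauLevels B d] z₀) atTop ∧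
      Tendsto (xiB B d b) (𝓝[Set.Ioi z₀ \ landauLevels B d] z₀) atBot) := by
  obtain ⟨δ, C, hδ, hC⟩ := xiB_bounded_aux B d b z₀ hB hd s hs
  have hπ := Real.pi_pos
  have hA : 0 < |B| := abs_pos.mpr hB
  have hball : ∀ᶠ z in 𝓝 z₀, |z - z₀| ≤ δ := by
    filter_upwards [Metric.closedBall_mem_nhds z₀ hδ] with z hz
    simpa [Metric.mem_closedBall, Real.dist_eq] using hz
  constructor
  · refine ⟨C, ?_⟩
    filter_upwards [hball.filter_mono nhdsWithin_le_nhds, self_mem_nhdsWithin] with z hz hz2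
    exact hC z (fun h => hz2 (h ▸ hz₀)) hz
  · intro hspos
    have hKs : 0 < |B| / (π * d) * s :=
      mul_pos (div_pos hA (by positivity)) hspos
    constructor
    · -- z → z₀⁻ : xiB → atTop
      have hsub : Tendsto (fun z => z₀ - z) (𝓝[Set.Iio z₀] z₀) (𝓝[Set.Ioi 0] 0) := by
        apply tendsto_nhdsWithin_of_tendsto_nhds_of_eventually_within
        · have h0 : Tendsto (fun z : ℝ => z₀ - z) (𝓝 z₀) (𝓝 (z₀ - z₀)) :=
            tendsto_const_nhds.sub tendsto_id
          simpa using h0.mono_left nhdsWithin_le_nhds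
        · filter_upwards [self_mem_nhdsWithin] with z hz
          exact Set.mem_Ioi.mpr (sub_pos.mpr hz)
      have hpole : Tendsto (fun z => |B| / (π * d) * s * (z₀ - z)⁻¹)
          (𝓝[Set.Iio z₀] z₀) atTop :=
        (tendsto_inv_nhdsGT_zero.comp hsub).const_mul_atTop hKs
      have hmono : 𝓝[Set.Iio z₀ \ landauLevels B d] z₀ ≤ 𝓝[Set.Iio z₀] z₀ :=
        nhdsWithin_mono _ Set.diff_subset
      have hev : ∀ᶠ z in 𝓝[Set.Iio z₀ \ landauLevels B d] z₀,
          |B| / (π * d) * s * (z₀ - z)⁻¹ + -C ≤ xiB B d b z := by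
        filter_upwards [(hball.filter_mono nhdsWithin_le_nhds).filter_mono hmono,
          self_mem_nhdsWithin] with z hz hz2
        have hzlt : z < z₀ := hz2.1
        have hzne : z ≠ z₀ := ne_of_lt hzlt
        have hb := hC z hzne hz
        have hb1 := neg_le_of_abs_le hb
        have hrw : |B| / (π * d) * s / (z - z₀) = -(|B| / (π * d) * s * (z₀ - z)⁻¹) := by
          rw [div_eq_mul_inv, show z - z₀ = -(z₀ - z) by ring, inv_neg]
          ring
        rw [hrw] at hb1
        linarith
      exact tendsto_atTop_mono' _ hev (tendsto_atTop_add_const_right _ (-C) (hpole.mono_left hmono))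
    · -- z → z₀⁺ : xiB → atBot
      have hsub : Tendsto (fun z => z - z₀) (𝓝[Set.Ioi z₀] z₀) (𝓝[Set.Ioi 0] 0) := by
        apply tendsto_nhdsWithin_of_tendsto_nhds_of_eventually_within
        · have h0 : Tendsto (fun z : ℝ => z - z₀) (𝓝 z₀) (𝓝 (z₀ - z₀)) :=
            tendsto_id.sub tendsto_const_nhds
          simpa using h0.mono_left nhdsWithin_le_nhds
        · filter_upwards [self_mem_nhdsWithin] with z hz
          exact Set.mem_Ioi.mpr (sub_pos.mpr hz)
      have hpole : Tendsto (fun z => |B| / (π * d) * s * (z - z₀)⁻¹)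
          (𝓝[Set.Ioi z₀] z₀) atTop :=
        (tendsto_inv_nhdsGT_zero.comp hsub).const_mul_atTop hKs
      have hpole' : Tendsto (fun z => -(|B| / (π * d) * s * (z - z₀)⁻¹))
          (𝓝[Set.Ioi z₀] z₀) atBot := tendsto_neg_atTop_atBot.comp hpole
      have hmono : 𝓝[Set.Ioi z₀ \ landauLevels B d] z₀ ≤ 𝓝[Set.Ioi z₀] z₀ :=
        nhdsWithin_mono _ Set.diff_subset
      have hev : ∀ᶠ z in 𝓝[Set.Ioi z₀ \ landauLevels B d] z₀,
          xiB B d b z ≤ -(|B| / (π * d) * s * (z - z₀)⁻¹) + C := by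
        filter_upwards [(hball.filter_mono nhdsWithin_le_nhds).filter_mono hmono,
          self_mem_nhdsWithin] with z hz hz2
        have hzgt : z₀ < z := hz2.1
        have hzne : z ≠ z₀ := ne_of_gt hzgt
        have hb := hC z hzne hz
        have hb1 := le_of_abs_le hb
        have hrw : |B| / (π * d) * s / (z - z₀) = |B| / (π * d) * s * (z - z₀)⁻¹ :=
          div_eq_mul_inv _ _
        rw [hrw] at hb1
        linarith
      refine tendsto_atBot_mono' _ hev ?_
      have := tendsto_atBot_add_const_right _ C (hpole'.mono_left hmono)
      exact this
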